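/- Let $\Gamma$ be a $(Y,Y')$-distance-biregular graph. For any odd integer $i$ with $3 \le i \le \min\{D, D'\}$, the products of intersection numbers satisfy $c_1 c_2 \cdots c_i = c'_1 c'_2 \cdots c'_i$. -/

import Mathlib

open SimpleGraph Set

/-- A `(Y,Y')`-distance-biregular graph: a finite connected bipartite graph in which
every vertex is distance-regularized, and vertices in the same color class share the
same intersection numbers (`c`, `b` for class `Y` and `c'`, `b'` for class `Y'`),
while the two color classes have different intersection arrays.
`D` (resp. `D'`) is the common eccentricity of vertices in `Y` (resp. `Y'`). -/
structure DBRG (V : Type) [Fintype V] where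
  G : SimpleGraph V
  conn : G.Connected
  Y : Finset V
  Y' : Finset V
  Yne : Y.Nonempty
  Y'ne : Y'.Nonempty
  cover : ∀ v, v ∈ Y ∨ v ∈ Y'
  disj : ∀ v, ¬(v ∈ Y ∧ v ∈ Y')
  bip : ∀ u v, G.Adj u v → (u ∈ Y ↔ v ∈ Y')
  D : ℕ
  D' : ℕ
  eccY : ∀ x ∈ Y, (∃ y, G.dist x y = D) ∧ ∀ y, G.dist x y ≤ D
  eccY' : ∀ x ∈ Y', (∃ y, G.dist x y = D') ∧ ∀ y, G.dist x y ≤ D'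
  c : ℕ → ℕ
  b : ℕ → ℕ
  c' : ℕ → ℕ
  b' : ℕ → ℕ
  hc : ∀ i, 1 ≤ i → ∀ x ∈ Y, ∀ z, G.dist x z = i →
    {w | G.Adj z w ∧ G.dist x w = i - 1}.ncard = c i
  hb : ∀ i, ∀ x ∈ Y, ∀ z, G.dist x z = i →
    {w | G.Adj z w ∧ G.dist x w = i + 1}.ncard = b i
  hc' : ∀ i, 1 ≤ i → ∀ x ∈ Y', ∀ z, G.dist x z = i →
    {w | G.Adj z w ∧ G.dist x w = i - 1}.ncard = c' i
  hb' : ∀ i, ∀ x ∈ Y', ∀ z, G.dist x z = i →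
    {w | G.Adj z w ∧ G.dist x w = i + 1}.ncard = b' i
  c0 : c 0 = 0
  c'0 : c' 0 = 0
  nonreg : ¬ (∀ i, c i = c' i ∧ b i = b' i)

/-- `Γ` is `2`-`Y`-homogeneous with parameters `γ i`: for all `1 ≤ i ≤ D - 1` and all
`x ∈ Y`, `y ∈ Γ₂(x)`, `z ∈ Γ_{i,i}(x,y)`, the number of common neighbours of `x` and `y`
at distance `i - 1` from `z` equals `γ i` (independently of `x`, `y`, `z`). -/
def DBRG.TwoYHom {V : Type} [Fintype V] (Γ : DBRG V) (γ : ℕ → ℕ) : Prop :=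
  ∀ i, 1 ≤ i → i ≤ Γ.D - 1 → ∀ x ∈ Γ.Y, ∀ y, Γ.G.dist x y = 2 →
    ∀ z, Γ.G.dist x z = i → Γ.G.dist y z = i →
      {w | Γ.G.dist z w = i - 1 ∧ Γ.G.Adj x w ∧ Γ.G.Adj y w}.ncard = γ i
/-
Count the walks of length `i` between `x ∈ Y` and a vertex `y` at distance `i` from `x`.
These are the geodesics, and peeling off the first edge of a geodesic ending at `x` shows
that there are `c₁ ⋯ cᵢ` of them; since `i` is odd, `y ∈ Y'`, and the same count seen from
`y` gives `c'₁ ⋯ c'ᵢ`.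
-/

open Finset

namespace SimpleGraph

variable {V : Type} {G : SimpleGraph V}

lemma Walk.dist_getVert_of_length_eq_dist {u v : V} (p : G.Walk u v)
    (hp : p.length = G.dist u v) (n : ℕ) : G.dist u (p.getVert n) = min n p.length := by
  rw [← length_eq_dist_of_subwalk hp (p.isSubwalk_take n), Walk.take_length]

lemma Reachable.exists_dist_eq_of_le {u v : V} (h : G.Reachable u v) {n : ℕ}
    (hn : n ≤ G.dist u v) : ∃ w, G.dist u w = n := by
  obtain ⟨p, hp⟩ := h.exists_walk_length_eq_dist
  exact ⟨p.getVert n, by rw [p.dist_getVert_of_length_eq_dist hp]; omega⟩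

section LocallyFinite

variable [DecidableEq V] [LocallyFinite G]

lemma card_finsetWalkLength_comm (n : ℕ) (u v : V) :
    #(G.finsetWalkLength n u v) = #(G.finsetWalkLength n v u) :=
  card_nbij' Walk.reverse Walk.reverse (fun p hp => by simpa [mem_finsetWalkLength_iff] using hp)
    (fun p hp => by simpa [mem_finsetWalkLength_iff] using hp) (fun p _ => p.reverse_reverse)
    (fun p _ => p.reverse_reverse)

end LocallyFinite

variable [Fintype V] [DecidableEq V] [DecidableRel G.Adj]

lemma card_finsetWalkLength_succ (n : ℕ) (u v : V) :
    #(G.finsetWalkLength (n + 1) u v) = ∑ w ∈ G.neighborFinset u, #(G.finsetWalkLength n w v) := by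
  have hpow (m : ℕ) (a b : V) : (G.adjMatrix ℕ ^ m) a b = #(G.finsetWalkLength m a b) := by
    rw [adjMatrix_pow_apply_eq_card_walk, card_set_walk_length_eq, Nat.cast_id]
  simp only [← hpow, pow_succ', adjMatrix_mul_apply]

theorem card_finsetWalkLength_dist_eq_prod (hconn : G.Connected) {x : V} {f : ℕ → ℕ}
    (hf : ∀ m, 1 ≤ m → ∀ z, G.dist x z = m → {w | G.Adj z w ∧ G.dist x w = m - 1}.ncard = f m)
    (u : V) : #(G.finsetWalkLength (G.dist x u) u x) = ∏ l ∈ Icc 1 (G.dist x u), f l := by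
  induction hn : G.dist x u generalizing u with
  | zero =>
    obtain rfl := hconn.dist_eq_zero_iff.mp hn
    simp [finsetWalkLength]
  | succ n ih =>
    have hnext : ∀ w ∈ G.neighborFinset u, #(G.finsetWalkLength n w x) ≠ 0 → G.dist x w = n := by
      intro w hw hne
      have hadj : G.Adj w u := ((mem_neighborFinset G u w).mp hw).symm
      obtain ⟨p, hp⟩ := card_ne_zero.mp hne
      have hle : G.dist x w ≤ n :=
        G.dist_comm.trans_le ((dist_le p).trans_eq (mem_finsetWalkLength_iff.mp hp))
      have hge : G.dist x u ≤ G.dist x w + G.dist w u := hadj.reachable.dist_triangle_right x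
      rw [hn, dist_eq_one_iff_adj.mpr hadj] at hge
      omega
    have hcount : #{w ∈ G.neighborFinset u | G.dist x w = n} = f (n + 1) := by
      rw [← hf (n + 1) (by omega) u hn, ← Set.ncard_coe_finset]
      congr 1
      ext w
      simp
    calc #(G.finsetWalkLength (n + 1) u x)
        = ∑ w ∈ G.neighborFinset u, #(G.finsetWalkLength n w x) := card_finsetWalkLength_succ ..
      _ = ∑ w ∈ G.neighborFinset u with G.dist x w = n, #(G.finsetWalkLength n w x) :=
        (sum_filter_of_ne hnext).symm
      _ = f (n + 1) * ∏ l ∈ Icc 1 n, f l := by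
        rw [sum_const_nat fun w hw => ih w (mem_filter.mp hw).2, hcount]
      _ = ∏ l ∈ Icc 1 (n + 1), f l := by
        rw [prod_Icc_succ_top (by omega), mul_comm]

end SimpleGraph

namespace DBRG

variable {V : Type} [Fintype V] (Γ : DBRG V)

lemma mem_Y'_iff_notMem_Y (v : V) : v ∈ Γ.Y' ↔ v ∉ Γ.Y := by
  have := Γ.cover v
  have := Γ.disj v
  tauto

def coloring [DecidableEq V] : Γ.G.Coloring Bool :=
  SimpleGraph.Coloring.mk (fun v => decide (v ∈ Γ.Y)) fun {u v} h => by
    have := Γ.bip u v h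
    rw [mem_Y'_iff_notMem_Y] at this
    by_cases hu : u ∈ Γ.Y <;> simp_all

lemma coloring_apply [DecidableEq V] (v : V) : Γ.coloring v = decide (v ∈ Γ.Y) := rfl

lemma mem_Y'_of_odd_length {x y : V} (p : Γ.G.Walk x y) (hx : x ∈ Γ.Y) (hp : Odd p.length) :
    y ∈ Γ.Y' := by
  classical
  rw [Γ.coloring.odd_length_iff_not_congr] at hp
  simpa [coloring_apply, hx, mem_Y'_iff_notMem_Y] using hp

end DBRG

theorem stmt_5_general {V : Type} [Fintype V] (Γ : DBRG V)
    (i : ℕ) (hodd : Odd i) (hi2 : i ≤ min Γ.D Γ.D') :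
    ∏ l ∈ Finset.Icc 1 i, Γ.c l = ∏ l ∈ Finset.Icc 1 i, Γ.c' l := by
  classical
  obtain ⟨x, hx⟩ := Γ.Yne
  obtain ⟨⟨y₀, hy₀⟩, -⟩ := Γ.eccY x hx
  obtain ⟨y, hy⟩ := (Γ.conn x y₀).exists_dist_eq_of_le (hy₀ ▸ hi2.trans (min_le_left _ _))
  obtain ⟨p, hp⟩ := (Γ.conn x y).exists_walk_length_eq_dist
  have hyY' : y ∈ Γ.Y' := Γ.mem_Y'_of_odd_length p hx (by rwa [hp, hy])
  calc ∏ l ∈ Icc 1 i, Γ.c l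
      = #(Γ.G.finsetWalkLength i y x) := by
        rw [← hy, SimpleGraph.card_finsetWalkLength_dist_eq_prod Γ.conn
          (fun m hm => Γ.hc m hm x hx)]
    _ = #(Γ.G.finsetWalkLength i x y) := SimpleGraph.card_finsetWalkLength_comm ..
    _ = ∏ l ∈ Icc 1 i, Γ.c' l := by
        rw [← hy, SimpleGraph.dist_comm, SimpleGraph.card_finsetWalkLength_dist_eq_prod Γ.conn
          (fun m hm => Γ.hc' m hm y hyY')]

theorem stmt_5 {V : Type} [Fintype V] (Γ : DBRG V) (hD : 3 ≤ Γ.D)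
    (i : ℕ) (hodd : Odd i) (hi1 : 3 ≤ i) (hi2 : i ≤ min Γ.D Γ.D') :
    ∏ l ∈ Finset.Icc 1 i, Γ.c l = ∏ l ∈ Finset.Icc 1 i, Γ.c' l :=
  stmt_5_general Γ i hodd hi2
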